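/- arXiv:2603.18283 — 3 statements merged into one kernel-verified Lean document; each statement's English description precedes it below -/
import Mathlib

section
/- Let Y = (y, μ) have distinct values y_1 > ⋯ > y_{m'} > 0 with total multiplicity binom(n,2), and let 𝒫_y = {(r,s,t) ∈ {1,…,m'}³ : y_r + y_s = y_t and (r ≠ s or μ_r ≥ 2)}. The following purely combinatorial system is solvable if and only if Y is realizable: there exist binary variables P^r_{ij} ∈ {0,1} for each interval (i,j), i < j, and each r ∈ {1,…,m'}, and binary variables T^{rst}_{ijk} ∈ {0,1} for each refinement i < j < k and each (r,s,t) ∈ 𝒫_y, satisfying: (a) Σ_r P^r_{ij} = 1 for each interval; (b) Σ_{(i,j)} P^r_{ij} = μ_r for each r; (c) Σ_{(r,s,t) ∈ 𝒫_y} T^{rst}_{ijk} = 1 for each refinement i < j < k; (d) for each refinement and each r, P^r_{ij} = Σ_{(r,s,t) ∈ 𝒫_y} T^{rst}_{ijk}; (e) for each refinement and each s, P^s_{jk} = Σ_{(r,s,t) ∈ 𝒫_y} T^{rst}_{ijk}; and (f) for each refinement and each t, P^t_{ik} = Σ_{(r,s,t) ∈ 𝒫_y} T^{rst}_{ijk}.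 -/
/-!
A realization `x` yields the solution `P^r_{ij} = [x_j - x_i = y_r]` and
`T^{rst}_{ijk} = [(x_j - x_i, x_k - x_j, x_k - x_i) = (y_r, y_s, y_t)]`; this triple lies in `𝒫_y`
because a repeated value `y_r = y_s` is then counted by the two intervals `(i,j)` and `(j,k)`.

Conversely, constraints (d)–(f) are linear: weighting them by `y` and using `y_r + y_s = y_t` on
`𝒫_y` shows that the lengths `ℓ_{ij} = ∑_r P^r_{ij} y_r` are additive along `i < j < k`, so they
are the differences `x_j - x_i` of a single point set. Binarity and (a) make `P_{ij}` the indicator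
of the unique `r` with `ℓ_{ij} = y_r`, and (b) then counts the multiplicities.
-/

open scoped Classical

/-- The difference multiset `Δx = {x j - x i : i < j}` of a tuple `x : ℝⁿ`. -/
def deltaMultiset (n : ℕ) (x : Fin n → ℝ) : Multiset ℝ :=
  (Finset.univ.filter (fun p : Fin n × Fin n => p.1 < p.2)).val.map
    (fun p => x p.2 - x p.1)

/-- The multiset with distinct values `y r` each of multiplicity `μ r`. -/
def multisetOf {m' : ℕ} (y : Fin m' → ℝ) (μ : Fin m' → ℕ) : Multiset ℝ :=
  (Finset.univ.val : Multiset (Fin m')).bind (fun r => Multiset.replicate (μ r) (y r))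

/-- The two-partition set `𝒫_y = {(r,s,t) : y_r + y_s = y_t, with μ_r ≥ 2 when r = s}`. -/
noncomputable def twoPartitions {m' : ℕ} (y : Fin m' → ℝ) (μ : Fin m' → ℕ) :
    Finset (Fin m' × Fin m' × Fin m') :=
  Finset.univ.filter
    (fun rst => y rst.1 + y rst.2.1 = y rst.2.2 ∧ (rst.1 ≠ rst.2.1 ∨ 2 ≤ μ rst.1))

open Finset Function

def IsTriangleILPSolution (n : ℕ) {m' : ℕ} (y : Fin m' → ℝ) (μ : Fin m' → ℕ)
    (P : Fin n → Fin n → Fin m' → ℝ)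
    (T : Fin n → Fin n → Fin n → Fin m' × Fin m' × Fin m' → ℝ) : Prop :=
  (∀ i j : Fin n, i < j → ∀ r : Fin m', P i j r = 0 ∨ P i j r = 1) ∧
  (∀ i j k : Fin n, i < j → j < k → ∀ rst ∈ twoPartitions y μ,
    T i j k rst = 0 ∨ T i j k rst = 1) ∧
  (∀ i j : Fin n, i < j → ∑ r : Fin m', P i j r = 1) ∧
  (∀ r : Fin m',
    ∑ p ∈ Finset.univ.filter (fun p : Fin n × Fin n => p.1 < p.2),
      P p.1 p.2 r = (μ r : ℝ)) ∧
  (∀ i j k : Fin n, i < j → j < k →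
    ∑ rst ∈ twoPartitions y μ, T i j k rst = 1) ∧
  (∀ i j k : Fin n, i < j → j < k → ∀ r : Fin m',
    P i j r = ∑ rst ∈ (twoPartitions y μ).filter (fun rst => rst.1 = r),
      T i j k rst) ∧
  (∀ i j k : Fin n, i < j → j < k → ∀ s : Fin m',
    P j k s = ∑ rst ∈ (twoPartitions y μ).filter (fun rst => rst.2.1 = s),
      T i j k rst) ∧
  (∀ i j k : Fin n, i < j → j < k → ∀ t : Fin m',
    P i k t = ∑ rst ∈ (twoPartitions y μ).filter (fun rst => rst.2.2 = t),
      T i j k rst)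

theorem exists_eq_ite_of_sum_eq_one {α R : Type*} [DecidableEq α] [AddCommMonoidWithOne R]
    [CharZero R] {s : Finset α} {f : α → R} (hf : ∀ a ∈ s, f a = 0 ∨ f a = 1)
    (hsum : ∑ a ∈ s, f a = 1) : ∃ a₀ ∈ s, ∀ a ∈ s, f a = if a = a₀ then 1 else 0 := by
  have hcard : #{a ∈ s | f a = 1} = 1 := by
    have : ∑ a ∈ s, f a = ∑ a ∈ s, if f a = 1 then (1 : R) else 0 :=
      sum_congr rfl fun a ha => by rcases hf a ha with h | h <;> simp [h]
    rw [this, sum_boole] at hsum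
    exact_mod_cast hsum
  obtain ⟨a₀, ha₀⟩ := card_eq_one.1 hcard
  have hmem : ∀ a, a ∈ s ∧ f a = 1 ↔ a = a₀ := fun a => by
    simpa using Finset.ext_iff.1 ha₀ a
  obtain ⟨hs₀, hf₀⟩ := (hmem a₀).2 rfl
  refine ⟨a₀, hs₀, fun a ha => ?_⟩
  split_ifs with h
  · exact h ▸ hf₀
  · exact (hf a ha).resolve_right fun h1 => h ((hmem a).1 ⟨ha, h1⟩)

theorem sum_fiberwise_mul {ι κ R : Type*} [Fintype κ] [DecidableEq κ]
    [NonUnitalNonAssocSemiring R] (s : Finset ι) (g : ι → κ) (T : ι → R) (y : κ → R) :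
    ∑ r, (∑ a ∈ s with g a = r, T a) * y r = ∑ a ∈ s, T a * y (g a) := by
  rw [← sum_fiberwise s g]
  refine sum_congr rfl fun r _ => ?_
  rw [sum_mul]
  exact sum_congr rfl fun a ha => by rw [(mem_filter.1 ha).2]

theorem exists_sub_eq_of_add_eq {G : Type*} [AddCommGroup G] {n : ℕ} (d : Fin n → Fin n → G)
    (hd : ∀ i j k, i < j → j < k → d i j + d j k = d i k) :
    ∃ x : Fin n → G, ∀ i j, i < j → x j - x i = d i j := by
  cases n with
  | zero => exact ⟨0, fun i => i.elim0⟩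
  | succ n =>
    refine ⟨fun j => if j = 0 then 0 else d 0 j, fun i j hij => ?_⟩
    have hj : j ≠ 0 := (hij.trans_le' (Fin.zero_le i)).ne'
    by_cases hi : i = 0
    · subst hi
      simp [hj]
    · simp only [if_neg hi, if_neg hj]
      rw [← hd 0 i j (Fin.pos_iff_ne_zero.2 hi) hij]
      abel

section TwoPartitions

variable {m' : ℕ} {y : Fin m' → ℝ} {μ : Fin m' → ℕ}

theorem mem_twoPartitions {rst : Fin m' × Fin m' × Fin m'} :
    rst ∈ twoPartitions y μ ↔
      y rst.1 + y rst.2.1 = y rst.2.2 ∧ (rst.1 ≠ rst.2.1 ∨ 2 ≤ μ rst.1) := by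
  simp [twoPartitions]

theorem sum_marginal_fst_mul_add_sum_marginal_snd_mul (T : Fin m' × Fin m' × Fin m' → ℝ) :
    ∑ r, (∑ rst ∈ (twoPartitions y μ).filter (fun rst => rst.1 = r), T rst) * y r +
      ∑ s, (∑ rst ∈ (twoPartitions y μ).filter (fun rst => rst.2.1 = s), T rst) * y s =
    ∑ t, (∑ rst ∈ (twoPartitions y μ).filter (fun rst => rst.2.2 = t), T rst) * y t := by
  simp only [sum_fiberwise_mul]
  rw [← sum_add_distrib]
  exact sum_congr rfl fun rst h => by rw [← mul_add, (mem_twoPartitions.1 h).1]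

end TwoPartitions

section Realization

variable {n m' : ℕ} {y : Fin m' → ℝ} {μ : Fin m' → ℕ}

theorem count_deltaMultiset (x : Fin n → ℝ) (a : ℝ) :
    (deltaMultiset n x).count a =
      #{p ∈ univ.filter (fun p : Fin n × Fin n => p.1 < p.2) | x p.2 - x p.1 = a} := by
  simp [deltaMultiset, Multiset.count_map, eq_comm, Finset.card_def, Finset.filter_val]

theorem count_multisetOf (a : ℝ) :
    (multisetOf y μ).count a = ∑ r, if y r = a then μ r else 0 := by
  simp [multisetOf, Multiset.count_bind, Multiset.count_replicate, Finset.sum]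

theorem deltaMultiset_eq_multisetOf_iff (hy : Injective y) {x : Fin n → ℝ} :
    deltaMultiset n x = multisetOf y μ ↔
      (∀ i j, i < j → ∃ r, x j - x i = y r) ∧
      ∀ r, #{p ∈ univ.filter (fun p : Fin n × Fin n => p.1 < p.2) | x p.2 - x p.1 = y r} = μ r := by
  have hcount_y : ∀ r, (multisetOf y μ).count (y r) = μ r := fun r => by
    simp [count_multisetOf, hy.eq_iff]
  constructor
  · intro h
    refine ⟨fun i j hij => ?_, fun r => by rw [← count_deltaMultiset, h, hcount_y]⟩
    have hmem : x j - x i ∈ multisetOf y μ := h ▸ Multiset.mem_map.2 ⟨(i, j), by simpa, rfl⟩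
    obtain ⟨r, hr⟩ := by simpa [multisetOf] using hmem
    exact ⟨r, Multiset.eq_of_mem_replicate hr⟩
  · rintro ⟨hx, hcount⟩
    refine Multiset.ext.2 fun a => ?_
    by_cases ha : ∃ r, y r = a
    · obtain ⟨r, rfl⟩ := ha
      rw [count_deltaMultiset, hcount_y, hcount]
    · push Not at ha
      rw [count_deltaMultiset, count_multisetOf, sum_eq_zero fun r _ => if_neg (ha r),
        card_eq_zero, filter_eq_empty_iff]
      intro p hp
      obtain ⟨r, hr⟩ := hx p.1 p.2 (mem_filter.1 hp).2
      exact hr ▸ ha r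

theorem exists_mem_twoPartitions_of_realizes {x : Fin n → ℝ}
    (hx : ∀ i j, i < j → ∃ r, x j - x i = y r)
    (hcount : ∀ r, #{p ∈ univ.filter (fun p : Fin n × Fin n => p.1 < p.2) |
      x p.2 - x p.1 = y r} = μ r)
    {i j k : Fin n} (hij : i < j) (hjk : j < k) :
    ∃ rst ∈ twoPartitions y μ,
      x j - x i = y rst.1 ∧ x k - x j = y rst.2.1 ∧ x k - x i = y rst.2.2 := by
  obtain ⟨r, hr⟩ := hx i j hij
  obtain ⟨s, hs⟩ := hx j k hjk
  obtain ⟨t, ht⟩ := hx i k (hij.trans hjk)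
  refine ⟨(r, s, t), mem_twoPartitions.2 ⟨by rw [← hr, ← hs, ← ht]; ring, ?_⟩, hr, hs, ht⟩
  rcases eq_or_ne r s with rfl | hrs
  · refine Or.inr (hcount r ▸ one_lt_card.2 ⟨(i, j), ?_, (j, k), ?_, ?_⟩)
    · simp [hij, hr]
    · simp [hjk, hs]
    · exact fun h => hij.ne (congrArg Prod.fst h)
  · exact Or.inl hrs

theorem isTriangleILPSolution_of_realizes (hy : Injective y) {x : Fin n → ℝ}
    (hx : ∀ i j, i < j → ∃ r, x j - x i = y r)
    (hcount : ∀ r, #{p ∈ univ.filter (fun p : Fin n × Fin n => p.1 < p.2) |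
      x p.2 - x p.1 = y r} = μ r) :
    IsTriangleILPSolution n y μ (fun i j r => if x j - x i = y r then 1 else 0)
      (fun i j k rst => if x j - x i = y rst.1 ∧ x k - x j = y rst.2.1 ∧
        x k - x i = y rst.2.2 then 1 else 0) := by
  refine ⟨fun _ _ _ _ => (ite_eq_or_eq _ _ _).symm, fun _ _ _ _ _ _ _ => (ite_eq_or_eq _ _ _).symm,
    fun i j hij => ?_, fun r => ?_, fun i j k hij hjk => ?_, fun i j k hij hjk r => ?_,
    fun i j k hij hjk s => ?_, fun i j k hij hjk t => ?_⟩
  · obtain ⟨r, hr⟩ := hx i j hij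
    simp [hr, hy.eq_iff]
  · simp only [sum_boole]
    exact_mod_cast hcount r
  all_goals
    obtain ⟨a, ha, h₁, h₂, h₃⟩ := exists_mem_twoPartitions_of_realizes hx hcount hij hjk
    have hT : ∀ rst : Fin m' × Fin m' × Fin m', (if x j - x i = y rst.1 ∧ x k - x j = y rst.2.1 ∧
        x k - x i = y rst.2.2 then (1 : ℝ) else 0) = if rst = a then 1 else 0 := fun rst => by
      simp only [h₁, h₂, h₃, hy.eq_iff, Prod.ext_iff, eq_comm]
    simp only [hT]
    simp only [sum_ite_eq', mem_filter, ha, true_and, h₁, h₂, h₃, hy.eq_iff, if_true]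

theorem exists_sub_eq_of_isTriangleILPSolution {P : Fin n → Fin n → Fin m' → ℝ}
    {T : Fin n → Fin n → Fin n → Fin m' × Fin m' × Fin m' → ℝ}
    (h : IsTriangleILPSolution n y μ P T) :
    ∃ x : Fin n → ℝ, ∀ i j, i < j → x j - x i = ∑ r, P i j r * y r := by
  obtain ⟨-, -, -, -, -, hd, he, hf⟩ := h
  refine exists_sub_eq_of_add_eq _ fun i j k hij hjk => ?_
  simp only [hd i j k hij hjk, he i j k hij hjk, hf i j k hij hjk]
  exact sum_marginal_fst_mul_add_sum_marginal_snd_mul (T i j k)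

theorem realizes_of_isTriangleILPSolution (hy : Injective y) (hpos : ∀ r, 0 < y r)
    {P : Fin n → Fin n → Fin m' → ℝ}
    {T : Fin n → Fin n → Fin n → Fin m' × Fin m' × Fin m' → ℝ}
    (h : IsTriangleILPSolution n y μ P T) :
    ∃ x : Fin n → ℝ, StrictMono x ∧ deltaMultiset n x = multisetOf y μ := by
  obtain ⟨x, hx⟩ := exists_sub_eq_of_isTriangleILPSolution h
  obtain ⟨hPb, -, ha, hb, -⟩ := h
  have hP : ∀ i j, i < j → ∃ r₀, x j - x i = y r₀ ∧
      ∀ r, P i j r = if x j - x i = y r then 1 else 0 := by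
    intro i j hij
    obtain ⟨r₀, -, hr₀⟩ := exists_eq_ite_of_sum_eq_one (fun r _ => hPb i j hij r) (ha i j hij)
    have hxr₀ : x j - x i = y r₀ := by simp [hx i j hij, hr₀]
    exact ⟨r₀, hxr₀, fun r => by simp [hr₀, hxr₀, hy.eq_iff, eq_comm]⟩
  refine ⟨x, fun i j hij => ?_, (deltaMultiset_eq_multisetOf_iff hy).2
    ⟨fun i j hij => (hP i j hij).imp fun _ => And.left, fun r => ?_⟩⟩
  · obtain ⟨r₀, hr₀, -⟩ := hP i j hij
    linarith [hpos r₀]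
  · have hbr := hb r
    rw [sum_congr rfl fun p hp => (hP p.1 p.2 (mem_filter.1 hp).2).choose_spec.2 r,
      sum_boole] at hbr
    exact_mod_cast hbr

end Realization

theorem triangle_ilp_feasible_iff_realizable_general (n m' : ℕ)
    (y : Fin m' → ℝ) (μ : Fin m' → ℕ)
    (hy : StrictAnti y) (hpos : ∀ r, 0 < y r) :
    (∃ (P : Fin n → Fin n → Fin m' → ℝ)
       (T : Fin n → Fin n → Fin n → Fin m' × Fin m' × Fin m' → ℝ),
      (∀ i j : Fin n, i < j → ∀ r : Fin m', P i j r = 0 ∨ P i j r = 1) ∧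
      (∀ i j k : Fin n, i < j → j < k → ∀ rst ∈ twoPartitions y μ,
        T i j k rst = 0 ∨ T i j k rst = 1) ∧
      (∀ i j : Fin n, i < j → ∑ r : Fin m', P i j r = 1) ∧
      (∀ r : Fin m',
        ∑ p ∈ Finset.univ.filter (fun p : Fin n × Fin n => p.1 < p.2),
          P p.1 p.2 r = (μ r : ℝ)) ∧
      (∀ i j k : Fin n, i < j → j < k →
        ∑ rst ∈ twoPartitions y μ, T i j k rst = 1) ∧
      (∀ i j k : Fin n, i < j → j < k → ∀ r : Fin m',
        P i j r = ∑ rst ∈ (twoPartitions y μ).filter (fun rst => rst.1 = r),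
          T i j k rst) ∧
      (∀ i j k : Fin n, i < j → j < k → ∀ s : Fin m',
        P j k s = ∑ rst ∈ (twoPartitions y μ).filter (fun rst => rst.2.1 = s),
          T i j k rst) ∧
      (∀ i j k : Fin n, i < j → j < k → ∀ t : Fin m',
        P i k t = ∑ rst ∈ (twoPartitions y μ).filter (fun rst => rst.2.2 = t),
          T i j k rst)) ↔
    (∃ x : Fin n → ℝ, StrictMono x ∧ deltaMultiset n x = multisetOf y μ) := by
  constructor
  · rintro ⟨P, T, hPT⟩
    exact realizes_of_isTriangleILPSolution hy.injective hpos hPT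
  · rintro ⟨x, -, hΔ⟩
    obtain ⟨hx, hcount⟩ := (deltaMultiset_eq_multisetOf_iff hy.injective).1 hΔ
    exact ⟨_, _, isTriangleILPSolution_of_realizes hy.injective hx hcount⟩

/-- The purely combinatorial triangle-based ILP — binary assignment
variables `P^r_{ij}` and binary triangle variables `T^{rst}_{ijk}` for `(r,s,t) ∈ 𝒫_y`
satisfying (a) `Σ_r P^r_{ij} = 1`, (b) `Σ_{i<j} P^r_{ij} = μ_r`,
(c) `Σ_{(r,s,t)∈𝒫_y} T^{rst}_{ijk} = 1`, and the marginalization identities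
(d) `P^r_{ij} = Σ_{(r,s,t)∈𝒫_y} T^{rst}_{ijk}`, (e) `P^s_{jk} = Σ T`,
(f) `P^t_{ik} = Σ T` — is solvable iff `Y = (y, μ)` is realizable. -/
theorem triangle_ilp_feasible_iff_realizable (n m' : ℕ)
    (y : Fin m' → ℝ) (μ : Fin m' → ℕ)
    (hy : StrictAnti y) (hpos : ∀ r, 0 < y r) (hμ : ∀ r, 1 ≤ μ r)
    (hsum : ∑ r, μ r = n.choose 2) :
    (∃ (P : Fin n → Fin n → Fin m' → ℝ)
       (T : Fin n → Fin n → Fin n → Fin m' × Fin m' × Fin m' → ℝ),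
      (∀ i j : Fin n, i < j → ∀ r : Fin m', P i j r = 0 ∨ P i j r = 1) ∧
      (∀ i j k : Fin n, i < j → j < k → ∀ rst ∈ twoPartitions y μ,
        T i j k rst = 0 ∨ T i j k rst = 1) ∧
      (∀ i j : Fin n, i < j → ∑ r : Fin m', P i j r = 1) ∧
      (∀ r : Fin m',
        ∑ p ∈ Finset.univ.filter (fun p : Fin n × Fin n => p.1 < p.2),
          P p.1 p.2 r = (μ r : ℝ)) ∧
      (∀ i j k : Fin n, i < j → j < k →
        ∑ rst ∈ twoPartitions y μ, T i j k rst = 1) ∧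
      (∀ i j k : Fin n, i < j → j < k → ∀ r : Fin m',
        P i j r = ∑ rst ∈ (twoPartitions y μ).filter (fun rst => rst.1 = r),
          T i j k rst) ∧
      (∀ i j k : Fin n, i < j → j < k → ∀ s : Fin m',
        P j k s = ∑ rst ∈ (twoPartitions y μ).filter (fun rst => rst.2.1 = s),
          T i j k rst) ∧
      (∀ i j k : Fin n, i < j → j < k → ∀ t : Fin m',
        P i k t = ∑ rst ∈ (twoPartitions y μ).filter (fun rst => rst.2.2 = t),
          T i j k rst)) ↔
    (∃ x : Fin n → ℝ, StrictMono x ∧ deltaMultiset n x = multisetOf y μ) :=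
  triangle_ilp_feasible_iff_realizable_general n m' y μ hy hpos
end

section
/- Let y_1 > ⋯ > y_{m'} > 0 with multiplicities μ, and let 𝒫_y be its two-partition set. Suppose real variables P^r_{ij} ∈ [0,1] (for intervals i < j and r ∈ {1,…,m'}) and T^{rst}_{ijk} ∈ [0,1] (for refinements i < j < k and (r,s,t) ∈ 𝒫_y) satisfy the linear constraints: Σ_r P^r_{ij} = 1 for each interval; Σ_{(r,s,t)∈𝒫_y} T^{rst}_{ijk} = 1 for each refinement; and the marginalization identities P^r_{ij} = Σ_{(r,s,t)∈𝒫_y} T^{rst}_{ijk}, P^s_{jk} = Σ_{(r,s,t)∈𝒫_y} T^{rst}_{ijk}, P^t_{ik} = Σ_{(r,s,t)∈𝒫_y} T^{rst}_{ijk} for each refinement and each index. Define ρ^{(P)}_{ij} := Σ_{r=1}^{m'} y_r P^r_{ij} for i < j, ρ^{(P)}_{ii} = 0, and ρ^{(P)}_{ji} = −ρ^{(P)}_{ij}. Then ρ^{(P)}_{ik} = ρ^{(P)}_{ij} + ρ^{(P)}_{jk} for all i < j < k, and consequently there exists x ∈ ℝⁿ, unique up to translation, with ρ^{(P)}_{ij}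 = x_j − x_i for all i, j. -/
open scoped Classical

/-!
Summing the marginalization identities against `y` rewrites `ρ_ij`, `ρ_jk` and `ρ_ik` as sums of
`y_r T^{rst}_{ijk}`, `y_s T^{rst}_{ijk}` and `y_t T^{rst}_{ijk}` over `𝒫_y`; since `y_r + y_s = y_t`
on `𝒫_y`, the triangle equality follows. A skew-symmetric matrix satisfying it on sorted triples
is a cocycle on all triples, hence a difference `x_j - x_i`, and two such potentials differ by a
constant.
-/

open Finset

theorem Finset.sum_mul_sum_filter_eq {ι κ R : Type*} [Fintype κ] [DecidableEq κ]
    [NonUnitalNonAssocSemiring R] (s : Finset ι) (g : ι → κ) (v : κ → R) (f : ι → R) :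
    ∑ b, v b * ∑ a ∈ s with g a = b, f a = ∑ a ∈ s, v (g a) * f a := by
  rw [← sum_fiberwise s g (fun a => v (g a) * f a)]
  refine sum_congr rfl fun b _ => ?_
  rw [mul_sum]
  exact sum_congr rfl fun a ha => by rw [(mem_filter.mp ha).2]

theorem weighted_sum_add_of_marginals {κ R : Type*} [Fintype κ] [DecidableEq κ]
    [NonUnitalNonAssocSemiring R] (y : κ → R) (S : Finset (κ × κ × κ))
    (hS : ∀ rst ∈ S, y rst.1 + y rst.2.1 = y rst.2.2) (τ : κ × κ × κ → R) (p q u : κ → R)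
    (hp : ∀ r, p r = ∑ rst ∈ S with rst.1 = r, τ rst)
    (hq : ∀ s, q s = ∑ rst ∈ S with rst.2.1 = s, τ rst)
    (hu : ∀ t, u t = ∑ rst ∈ S with rst.2.2 = t, τ rst) :
    ∑ t, y t * u t = ∑ r, y r * p r + ∑ s, y s * q s := by
  simp only [hp, hq, hu, sum_mul_sum_filter_eq, ← sum_add_distrib, ← add_mul]
  exact sum_congr rfl fun rst h => by rw [hS rst h]

theorem cocycle_of_lt {α : Type*} [LinearOrder α] (ρ : α → α → ℝ)
    (hskew : ∀ i j, ρ j i = -ρ i j) (h : ∀ i j k, i < j → j < k → ρ i k = ρ i j + ρ j k)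
    (a b c : α) : ρ a c = ρ a b + ρ b c := by
  have := hskew a b; have := hskew b c; have := hskew a c
  have := hskew a a; have := hskew b b; have := hskew c c
  rcases lt_trichotomy a b with hab | hab | hab <;>
  rcases lt_trichotomy b c with hbc | hbc | hbc <;>
  rcases lt_trichotomy a c with hac | hac | hac
  -- each order pattern is impossible, degenerate, or a sorted triangle read through `hskew`
  all_goals first
    | (exfalso; order)
    | (subst_vars; linarith)
    | linarith [h _ _ _ hab hbc] | linarith [h _ _ _ hac hbc] | linarith [h _ _ _ hab hac]
    | linarith [h _ _ _ hbc hac] | linarith [h _ _ _ hac hab] | linarith [h _ _ _ hbc hab]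

theorem exists_sub_eq_of_cocycle {α G : Type*} [AddCommGroup G] (ρ : α → α → G)
    (h : ∀ a b c, ρ a c = ρ a b + ρ b c) : ∃ x : α → G, ∀ i j, ρ i j = x j - x i := by
  rcases isEmpty_or_nonempty α with _ | ⟨⟨o⟩⟩
  · exact ⟨0, isEmptyElim⟩
  · exact ⟨ρ o, fun i j => by rw [h o i j]; abel⟩

theorem exists_add_const_of_sub_eq_sub {α G : Type*} [AddCommGroup G] (x x' : α → G)
    (h : ∀ i j, x' j - x' i = x j - x i) : ∃ c, ∀ i, x' i = x i + c := by
  rcases isEmpty_or_nonempty α with _ | ⟨⟨o⟩⟩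
  · exact ⟨0, isEmptyElim⟩
  · exact ⟨x' o - x o, fun i => eq_add_of_sub_eq' (sub_eq_sub_iff_sub_eq_sub.mp (h o i))⟩

theorem lp_solution_induces_ruler_general (n m' : ℕ) (y : Fin m' → ℝ) (μ : Fin m' → ℕ)
    (P : Fin n → Fin n → Fin m' → ℝ)
    (T : Fin n → Fin n → Fin n → Fin m' × Fin m' × Fin m' → ℝ)
    (hMargR : ∀ i j k : Fin n, i < j → j < k → ∀ r : Fin m',
      P i j r = ∑ rst ∈ (twoPartitions y μ).filter (fun rst => rst.1 = r),
        T i j k rst)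
    (hMargS : ∀ i j k : Fin n, i < j → j < k → ∀ s : Fin m',
      P j k s = ∑ rst ∈ (twoPartitions y μ).filter (fun rst => rst.2.1 = s),
        T i j k rst)
    (hMargT : ∀ i j k : Fin n, i < j → j < k → ∀ t : Fin m',
      P i k t = ∑ rst ∈ (twoPartitions y μ).filter (fun rst => rst.2.2 = t),
        T i j k rst)
    (ρ : Fin n → Fin n → ℝ)
    (hρdef : ∀ i j : Fin n, i < j → ρ i j = ∑ r : Fin m', y r * P i j r)
    (hρskew : ∀ i j : Fin n, ρ j i = -ρ i j) :
    (∀ i j k : Fin n, i < j → j < k → ρ i k = ρ i j + ρ j k) ∧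
    (∃ x : Fin n → ℝ, (∀ i j : Fin n, ρ i j = x j - x i) ∧
      ∀ x' : Fin n → ℝ, (∀ i j : Fin n, ρ i j = x' j - x' i) →
        ∃ c : ℝ, ∀ i : Fin n, x' i = x i + c) := by
  have triangle : ∀ i j k : Fin n, i < j → j < k → ρ i k = ρ i j + ρ j k := by
    intro i j k hij hjk
    rw [hρdef i k (hij.trans hjk), hρdef i j hij, hρdef j k hjk]
    exact weighted_sum_add_of_marginals y _ (fun rst h => (mem_filter.mp h).2.1) (T i j k)
      _ _ _ (hMargR i j k hij hjk) (hMargS i j k hij hjk) (hMargT i j k hij hjk)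
  obtain ⟨x, hx⟩ := exists_sub_eq_of_cocycle ρ (cocycle_of_lt ρ hρskew triangle)
  refine ⟨triangle, x, hx, fun x' hx' => exists_add_const_of_sub_eq_sub x x' fun i j => ?_⟩
  rw [← hx, ← hx']

/-- Any (possibly fractional) feasible solution `(P, T)` of the
triangle-based LP relaxation induces, via `ρ^{(P)}_{ij} = Σ_r y_r P^r_{ij}`
(extended by zero diagonal and skew-symmetry), a matrix satisfying all triangle
equalities on `i < j < k`; consequently there exists `x ∈ ℝⁿ`, unique up to
translation, with `ρ^{(P)}_{ij} = x_j - x_i` for all `i, j`. -/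
theorem lp_solution_induces_ruler (n m' : ℕ) (y : Fin m' → ℝ) (μ : Fin m' → ℕ)
    (hy : StrictAnti y) (hpos : ∀ r, 0 < y r) (hμ : ∀ r, 1 ≤ μ r)
    (P : Fin n → Fin n → Fin m' → ℝ)
    (T : Fin n → Fin n → Fin n → Fin m' × Fin m' × Fin m' → ℝ)
    (hPrange : ∀ i j : Fin n, i < j → ∀ r : Fin m', 0 ≤ P i j r ∧ P i j r ≤ 1)
    (hTrange : ∀ i j k : Fin n, i < j → j < k → ∀ rst ∈ twoPartitions y μ,
      0 ≤ T i j k rst ∧ T i j k rst ≤ 1)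
    (hPsum : ∀ i j : Fin n, i < j → ∑ r : Fin m', P i j r = 1)
    (hTsum : ∀ i j k : Fin n, i < j → j < k →
      ∑ rst ∈ twoPartitions y μ, T i j k rst = 1)
    (hMargR : ∀ i j k : Fin n, i < j → j < k → ∀ r : Fin m',
      P i j r = ∑ rst ∈ (twoPartitions y μ).filter (fun rst => rst.1 = r),
        T i j k rst)
    (hMargS : ∀ i j k : Fin n, i < j → j < k → ∀ s : Fin m',
      P j k s = ∑ rst ∈ (twoPartitions y μ).filter (fun rst => rst.2.1 = s),
        T i j k rst)
    (hMargT : ∀ i j k : Fin n, i < j → j < k → ∀ t : Fin m',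
      P i k t = ∑ rst ∈ (twoPartitions y μ).filter (fun rst => rst.2.2 = t),
        T i j k rst)
    (ρ : Fin n → Fin n → ℝ)
    (hρdef : ∀ i j : Fin n, i < j → ρ i j = ∑ r : Fin m', y r * P i j r)
    (hρdiag : ∀ i : Fin n, ρ i i = 0)
    (hρskew : ∀ i j : Fin n, ρ j i = -ρ i j) :
    (∀ i j k : Fin n, i < j → j < k → ρ i k = ρ i j + ρ j k) ∧
    (∃ x : Fin n → ℝ, (∀ i j : Fin n, ρ i j = x j - x i) ∧
      ∀ x' : Fin n → ℝ, (∀ i j : Fin n, ρ i j = x' j - x' i) →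
        ∃ c : ℝ, ∀ i : Fin n, x' i = x i + c) :=
  lp_solution_induces_ruler_general n m' y μ P T hMargR hMargS hMargT ρ hρdef hρskew
end

section
/- Let x ∈ ℝⁿ be strictly increasing, let m = binom(n,2), and let d_1 ≥ d_2 ≥ ⋯ ≥ d_m be the multiset Δx listed in nonincreasing order (with multiplicity). For an interval (i,j) with 1 ≤ i < j ≤ n, let rank_x(i,j) ∈ {1,…,m} be any index such that d_{rank_x(i,j)} = x_j − x_i. Then i·(n − j + 1) ≤ rank_x(i,j) ≤ m − binom(j − i + 1, 2) + 1. -/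
/-- The difference multiset `Δx = {x b - x a : 1 ≤ a < b ≤ n}` (one-based indexing). -/
def deltaMultisetNat (n : ℕ) (x : ℕ → ℝ) : Multiset ℝ :=
  ((Finset.Icc 1 n ×ˢ Finset.Icc 1 n).filter (fun p : ℕ × ℕ => p.1 < p.2)).val.map
    (fun p => x p.2 - x p.1)

open Finset
lemma tri_count (s : Finset ℕ) :
    ((s ×ˢ s).filter fun p : ℕ × ℕ => p.1 < p.2).card = s.card.choose 2 := by
  classical
  rw [← Sym2.card_image_offDiag]
  apply Finset.card_bij (fun p _ => Function.uncurry Sym2.mk p)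
  · rintro ⟨a, b⟩ hp
    simp only [mem_filter, mem_product] at hp
    exact Finset.mem_image.2 ⟨(a, b), Finset.mem_offDiag.2 ⟨hp.1.1, hp.1.2, hp.2.ne⟩, rfl⟩
  · rintro ⟨a, b⟩ ha ⟨c, e⟩ hc h
    simp only [mem_filter, mem_product] at ha hc
    rcases Sym2.eq_iff.1 h with ⟨rfl, rfl⟩ | ⟨rfl, rfl⟩
    · rfl
    · exact absurd hc.2 (by omega)
  · intro z hz
    obtain ⟨⟨a, b⟩, hab, rfl⟩ := Finset.mem_image.1 hz
    rw [Finset.mem_offDiag] at hab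
    rcases lt_or_gt_of_ne hab.2.2 with h | h
    · exact ⟨(a, b), by simp [mem_filter, mem_product, hab.1, hab.2.1, h], rfl⟩
    · exact ⟨(b, a), by simp [mem_filter, mem_product, hab.1, hab.2.1, h], Sym2.eq_swap⟩

/-- Let `x₁ < ⋯ < x_n`, `m = binom(n,2)`, and let
`d 1 ≥ d 2 ≥ ⋯ ≥ d m` be the multiset `Δx` listed in nonincreasing order.
If `rank` is any position in `{1,…,m}` with `d rank = x j - x i` for an interval
`1 ≤ i < j ≤ n`, then `i·(n − j + 1) ≤ rank ≤ m − binom(j − i + 1, 2) + 1`. -/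
theorem containment_rank_bounds (n : ℕ) (x : ℕ → ℝ)
    (hx : ∀ a b : ℕ, 1 ≤ a → a < b → b ≤ n → x a < x b)
    (m : ℕ) (hm : m = n.choose 2)
    (d : ℕ → ℝ)
    (hsorted : ∀ a b : ℕ, 1 ≤ a → a ≤ b → b ≤ m → d b ≤ d a)
    (hperm : (Finset.Icc 1 m).val.map d = deltaMultisetNat n x)
    (i j : ℕ) (hi : 1 ≤ i) (hij : i < j) (hj : j ≤ n)
    (rank : ℕ) (hrank₁ : 1 ≤ rank) (hrank₂ : rank ≤ m)
    (hrankval : d rank = x j - x i) :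
    i * (n - j + 1) ≤ rank ∧ rank ≤ m - (j - i + 1).choose 2 + 1 := by
  classical
  set v := x j - x i with hv
  have hcount : ∀ (p : ℝ → Prop) [DecidablePred p],
      ((Finset.Icc 1 m).filter fun k => p (d k)).card
        = (((Finset.Icc 1 n ×ˢ Finset.Icc 1 n).filter fun q : ℕ × ℕ => q.1 < q.2).filter
            fun q => p (x q.2 - x q.1)).card := by
    intro p hp
    have h := congrArg (Multiset.countP p) hperm
    simp only [deltaMultisetNat, Multiset.countP_map] at h
    simpa [Finset.card_filter, Multiset.countP_eq_card_filter, Finset.filter] using h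
  constructor
  · -- lower bound
    have hA : ((Finset.Icc 1 m).filter fun k => v < d k) ⊆ Finset.Icc 1 (rank - 1) := by
      intro k hk
      simp only [mem_filter, mem_Icc] at hk
      have hlt : k < rank := by
        by_contra hc
        push_neg at hc
        have := hsorted rank k hrank₁ hc hk.1.2
        rw [hrankval] at this
        linarith [hk.2]
      simp only [mem_Icc]
      omega
    have hAcard : ((Finset.Icc 1 m).filter fun k => v < d k).card ≤ rank - 1 := by
      have := Finset.card_le_card hA
      simpa [Nat.card_Icc] using this
    have hP : (Finset.Icc 1 i ×ˢ Finset.Icc j n).erase (i, j) ⊆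
        ((Finset.Icc 1 n ×ˢ Finset.Icc 1 n).filter fun q : ℕ × ℕ => q.1 < q.2).filter
          fun q => v < x q.2 - x q.1 := by
      rintro ⟨a, b⟩ h
      simp only [Finset.mem_erase, mem_product, mem_Icc, Prod.mk.injEq] at h
      obtain ⟨hne, ⟨ha1, hai⟩, ⟨hjb, hbn⟩⟩ := h
      have hxa : x a ≤ x i := by
        rcases eq_or_lt_of_le hai with rfl | h'
        · exact le_refl _
        · exact (hx a i ha1 h' (by omega)).le
      have hxb : x j ≤ x b := by
        rcases eq_or_lt_of_le hjb with rfl | h'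
        · exact le_refl _
        · exact (hx j b (by omega) h' hbn).le
      have hstrict : v < x b - x a := by
        rcases Decidable.em (a = i) with rfl | hne'
        · have hbj : b ≠ j := by intro hh; exact hne (by rw [hh])
          have : x j < x b := hx j b (by omega) (by omega) hbn
          simp only [hv]; linarith
        · have : x a < x i := hx a i ha1 (by omega) (by omega)
          simp only [hv]; linarith
      simp only [mem_filter, mem_product, mem_Icc]
      refine ⟨⟨⟨⟨ha1, by omega⟩, ⟨by omega, hbn⟩⟩, by omega⟩, hstrict⟩
    have hPcard : ((Finset.Icc 1 i ×ˢ Finset.Icc j n).erase (i, j)).card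
        = i * (n - j + 1) - 1 := by
      rw [Finset.card_erase_of_mem (by simp [mem_product, mem_Icc]; omega)]
      rw [Finset.card_product, Nat.card_Icc, Nat.card_Icc]
      have h1 : i + 1 - 1 = i := by omega
      have h2 : n + 1 - j = n - j + 1 := by omega
      rw [h1, h2]
    have hchain := (Finset.card_le_card hP).trans_eq (hcount (fun y => v < y)).symm
    rw [hPcard] at hchain
    have hpos : 1 ≤ i * (n - j + 1) := Nat.one_le_iff_ne_zero.2 (by positivity)
    have := hchain.trans hAcard
    omega
  · -- upper bound
    have hC : ((Finset.Icc 1 m).filter fun k => d k < v) ⊆ Finset.Icc (rank + 1) m := by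
      intro k hk
      simp only [mem_filter, mem_Icc] at hk
      have hlt : rank < k := by
        by_contra hc
        push_neg at hc
        have := hsorted k rank hk.1.1 hc hrank₂
        rw [hrankval] at this
        linarith [hk.2]
      simp only [mem_Icc]
      omega
    have hCcard : ((Finset.Icc 1 m).filter fun k => d k < v).card ≤ m - rank := by
      have := Finset.card_le_card hC
      simpa [Nat.card_Icc] using this
    have hQ : (((Finset.Icc i j ×ˢ Finset.Icc i j).filter
          fun p : ℕ × ℕ => p.1 < p.2).erase (i, j)) ⊆
        ((Finset.Icc 1 n ×ˢ Finset.Icc 1 n).filter fun q : ℕ × ℕ => q.1 < q.2).filter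
          fun q => x q.2 - x q.1 < v := by
      rintro ⟨a, b⟩ h
      simp only [Finset.mem_erase, mem_filter, mem_product, mem_Icc, Prod.mk.injEq] at h
      obtain ⟨hne, ⟨⟨hia, haj⟩, ⟨hib, hbj⟩⟩, hab⟩ := h
      have hxa : x i ≤ x a := by
        rcases eq_or_lt_of_le hia with rfl | h'
        · exact le_refl _
        · exact (hx i a hi h' (by omega)).le
      have hxb : x b ≤ x j := by
        rcases eq_or_lt_of_le hbj with rfl | h'
        · exact le_refl _
        · exact (hx b j (by omega) h' hj).le
      have hstrict : x b - x a < v := by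
        rcases Decidable.em (a = i) with rfl | hne'
        · have hbj' : b ≠ j := by intro hh; exact hne (by rw [hh])
          have : x b < x j := hx b j (by omega) (by omega) hj
          simp only [hv]; linarith
        · have : x i < x a := hx i a hi (by omega) (by omega)
          simp only [hv]; linarith
      simp only [mem_filter, mem_product, mem_Icc]
      refine ⟨⟨⟨⟨by omega, by omega⟩, ⟨by omega, by omega⟩⟩, hab⟩, hstrict⟩
    have hQcard : ((((Finset.Icc i j ×ˢ Finset.Icc i j).filter
          fun p : ℕ × ℕ => p.1 < p.2)).erase (i, j)).card
        = (j - i + 1).choose 2 - 1 := by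
      rw [Finset.card_erase_of_mem (by simp [mem_filter, mem_product, mem_Icc]; omega)]
      rw [tri_count, Nat.card_Icc]
      congr 2
      omega
    have hchain := (Finset.card_le_card hQ).trans_eq (hcount (fun y => y < v)).symm
    rw [hQcard] at hchain
    have hpos : 1 ≤ (j - i + 1).choose 2 := Nat.choose_pos (by omega)
    have := hchain.trans hCcard
    omega
end
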